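/- arXiv:1905.09332 — 8 statements merged into one kernel-verified Lean document; each statement's English description precedes it below -/
import Mathlib

section
/- Let k be a Gaussian integer and define the sequence V by V_0 = 1, V_1 = 2k - 1, V_{n+2} = 2k·V_{n+1} - V_n. Then for all n: V_n ≡ 1 (mod 4k(k-1)) if n ≡ 0 or 3 (mod 4), and V_n ≡ 2k - 1 (mod 4k(k-1)) if n ≡ 1 or 2 (mod 4). -/
open GaussianInt

theorem V_congruences (k : GaussianInt) (V : ℕ → GaussianInt)
    (hV0 : V 0 = 1) (hV1 : V 1 = 2 * k - 1)
    (hVrec : ∀ n, V (n + 2) = 2 * k * V (n + 1) - V n) :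
    ∀ n, ((n % 4 = 0 ∨ n % 4 = 3) → (4 * k * (k - 1)) ∣ V n - 1) ∧
      ((n % 4 = 1 ∨ n % 4 = 2) → (4 * k * (k - 1)) ∣ V n - (2 * k - 1)) := by
  intro n
  induction n using Nat.twoStepInduction with
  | zero =>
    refine ⟨fun _ => ⟨0, by simp [hV0]⟩, fun h => by omega⟩
  | one =>
    refine ⟨fun h => by omega, fun _ => ⟨0, by simp [hV1]⟩⟩
  | more n ih1 ih2 =>
    have h4 : n % 4 = 0 ∨ n % 4 = 1 ∨ n % 4 = 2 ∨ n % 4 = 3 := by omega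
    rcases h4 with h | h | h | h
    · refine ⟨fun hc => by omega, fun _ => ?_⟩
      obtain ⟨a, ha⟩ := ih1.1 (Or.inl h)
      obtain ⟨b, hb⟩ := ih2.2 (Or.inl (by omega))
      exact ⟨2 * k * b - a + 1, by rw [hVrec]; linear_combination (2 * k) * hb - ha⟩
    · refine ⟨fun _ => ?_, fun hc => by omega⟩
      obtain ⟨a, ha⟩ := ih1.2 (Or.inl h)
      obtain ⟨b, hb⟩ := ih2.2 (Or.inr (by omega))
      exact ⟨2 * k * b - a + 1, by rw [hVrec]; linear_combination (2 * k) * hb - ha⟩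
    · refine ⟨fun _ => ?_, fun hc => by omega⟩
      obtain ⟨a, ha⟩ := ih1.2 (Or.inr h)
      obtain ⟨b, hb⟩ := ih2.1 (Or.inr (by omega))
      exact ⟨2 * k * b - a, by rw [hVrec]; linear_combination (2 * k) * hb - ha⟩
    · refine ⟨fun hc => by omega, fun _ => ?_⟩
      obtain ⟨a, ha⟩ := ih1.1 (Or.inr h)
      obtain ⟨b, hb⟩ := ih2.1 (Or.inl (by omega))
      exact ⟨2 * k * b - a, by rw [hVrec]; linear_combination (2 * k) * hb - ha⟩
end

section
/- Let k be a Gaussian integer and define the sequence W by W_0 = 1, W_1 = 4k^2 - k - 2, W_{m+2} = 2(4k^2-2k-1)·W_{m+1} - W_m. Then for all m ≥ 0: W_{2m} ≡ -2mk + 2m + 1 (mod 4k(k-1)) and W_{2m+1} ≡ (2m+3)k - (2m+2) (mod 4k(k-1)). -/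
open GaussianInt

theorem W_congruences (k : GaussianInt) (W : ℕ → GaussianInt)
    (hW0 : W 0 = 1) (hW1 : W 1 = 4 * k ^ 2 - k - 2)
    (hWrec : ∀ m, W (m + 2) = 2 * (4 * k ^ 2 - 2 * k - 1) * W (m + 1) - W m) :
    ∀ m : ℕ,
      (4 * k * (k - 1)) ∣ W (2 * m) - (-(2 * (m : GaussianInt)) * k + 2 * (m : GaussianInt) + 1) ∧
      (4 * k * (k - 1)) ∣ W (2 * m + 1) - ((2 * (m : GaussianInt) + 3) * k - (2 * (m : GaussianInt) + 2)) := by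
  intro m
  induction m with
  | zero =>
    constructor
    · simp [hW0]
    · rw [hW1]
      exact ⟨1, by push_cast; ring⟩
  | succ n ih =>
    obtain ⟨⟨a, ha⟩, ⟨b, hb⟩⟩ := ih
    have h1 : W (2 * (n + 1)) - (-(2 * ((n + 1 : ℕ) : GaussianInt)) * k + 2 * ((n + 1 : ℕ) : GaussianInt) + 1)
        = 4 * k * (k - 1) * (2 * (4 * k ^ 2 - 2 * k - 1) * b - a
            + 2 * ((2 * (n : GaussianInt) + 3) * k - (2 * (n : GaussianInt) + 2)) + (2 * (n : GaussianInt) + 3)) := by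
      have hidx : 2 * (n + 1) = 2 * n + 2 := by ring
      rw [hidx, hWrec (2 * n)]
      push_cast
      linear_combination 2 * (4 * k ^ 2 - 2 * k - 1) * hb - ha
    have h2 : W (2 * (n + 1) + 1) - ((2 * ((n + 1 : ℕ) : GaussianInt) + 3) * k - (2 * ((n + 1 : ℕ) : GaussianInt) + 2))
        = 4 * k * (k - 1) * (2 * (4 * k ^ 2 - 2 * k - 1) * (2 * (4 * k ^ 2 - 2 * k - 1) * b - a
            + 2 * ((2 * (n : GaussianInt) + 3) * k - (2 * (n : GaussianInt) + 2)) + (2 * (n : GaussianInt) + 3)) - b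
            + 2 * (-(2 * ((n : GaussianInt) + 1)) * k + 2 * ((n : GaussianInt) + 1) + 1) - (2 * (n : GaussianInt) + 2)) := by
      have hidx : 2 * (n + 1) + 1 = 2 * n + 1 + 2 := by ring
      rw [hidx, hWrec (2 * n + 1)]
      have hidx2 : 2 * n + 1 + 1 = 2 * (n + 1) := by ring
      rw [hidx2]
      have h0' := h1
      push_cast at h0' ⊢
      linear_combination 2 * (4 * k ^ 2 - 2 * k - 1) * h0' - hb
    exact ⟨⟨_, h1⟩, ⟨_, h2⟩⟩
end

section
/- Let k be a Gaussian integer with |k| > 1, and define the sequence W by W_0 = 1, W_1 = 4k^2 - k - 2, W_{m+2} = 2(4k^2-2k-1)·W_{m+1} - W_m. Then |W_m| ≥ (8|k|^2 - 4|k| - 3)^{m-1} for all m ≥ 1, and the sequence (|W_m|) is strictly increasing. -/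
/-!
Write `a = |k|` and `b = 2(4k² - 2k - 1)`, so that `W (m + 2) = b W (m + 1) - W m` and, by the
reverse triangle inequality, `|b| ≥ 8a² - 4a - 2 = c + 1` with `c = 8a² - 4a - 3 > 1`.
As long as `|W m| ≤ |W (m + 1)|`, the recurrence gives
`|W (m + 2)| ≥ |b| |W (m + 1)| - |W m| ≥ c |W (m + 1)|`, which keeps the sequence of absolute
values nondecreasing; so inductively it grows at least geometrically with ratio `c`, starting
from `|W 1| ≥ 4a² - a - 2 > 1 = |W 0|`.
-/

section SecondOrderRecurrence

variable {R : Type*} [NormedRing R] [NormMulClass R] {x : ℕ → R} {b : R} {c : ℝ}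

theorem norm_recurrence_step (hb : c + 1 ≤ ‖b‖) (hx : ∀ m, x (m + 2) = b * x (m + 1) - x m)
    {m : ℕ} (hm : ‖x m‖ ≤ ‖x (m + 1)‖) : c * ‖x (m + 1)‖ ≤ ‖x (m + 2)‖ :=
  calc c * ‖x (m + 1)‖ ≤ ‖b‖ * ‖x (m + 1)‖ - ‖x m‖ := by
        nlinarith [norm_nonneg (x (m + 1))]
    _ = ‖b * x (m + 1)‖ - ‖x m‖ := by rw [norm_mul]
    _ ≤ ‖x (m + 2)‖ := hx m ▸ norm_sub_norm_le _ _

theorem monotone_norm_of_recurrence (hc : 1 ≤ c) (hb : c + 1 ≤ ‖b‖)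
    (hx : ∀ m, x (m + 2) = b * x (m + 1) - x m) (h01 : ‖x 0‖ ≤ ‖x 1‖) :
    Monotone fun m => ‖x m‖ := by
  refine monotone_nat_of_le_succ fun m => ?_
  induction m with
  | zero => exact h01
  | succ m ih =>
    calc ‖x (m + 1)‖ ≤ c * ‖x (m + 1)‖ := le_mul_of_one_le_left (norm_nonneg _) hc
      _ ≤ ‖x (m + 2)‖ := norm_recurrence_step hb hx ih

theorem pow_mul_norm_le_of_recurrence (hc : 1 ≤ c) (hb : c + 1 ≤ ‖b‖)
    (hx : ∀ m, x (m + 2) = b * x (m + 1) - x m) (h01 : ‖x 0‖ ≤ ‖x 1‖) (m : ℕ) :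
    c ^ m * ‖x 1‖ ≤ ‖x (m + 1)‖ := by
  induction m with
  | zero => simp
  | succ m ih =>
    calc c ^ (m + 1) * ‖x 1‖ = c * (c ^ m * ‖x 1‖) := by ring
      _ ≤ c * ‖x (m + 1)‖ := mul_le_mul_of_nonneg_left ih (by linarith)
      _ ≤ ‖x (m + 2)‖ :=
        norm_recurrence_step hb hx (monotone_norm_of_recurrence hc hb hx h01 m.le_succ)

theorem strictMono_norm_of_recurrence (hc : 1 < c) (hb : c + 1 ≤ ‖b‖)
    (hx : ∀ m, x (m + 2) = b * x (m + 1) - x m) (h01 : ‖x 0‖ < ‖x 1‖) :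
    StrictMono fun m => ‖x m‖ := by
  have hmono := monotone_norm_of_recurrence hc.le hb hx h01.le
  refine strictMono_nat_of_lt_succ fun m => ?_
  cases m with
  | zero => exact h01
  | succ m =>
    have hpos : 0 < ‖x (m + 1)‖ :=
      (_root_.norm_nonneg _).trans_lt (h01.trans_le (hmono (Nat.le_add_left 1 m)))
    calc ‖x (m + 1)‖ < c * ‖x (m + 1)‖ := lt_mul_of_one_lt_left hpos hc
      _ ≤ ‖x (m + 2)‖ := norm_recurrence_step hb hx (hmono m.le_succ)

end SecondOrderRecurrence

theorem norm_quadratic_ge {R : Type*} [NormedDivisionRing R] (p q r z : R) :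
    ‖p‖ * ‖z‖ ^ 2 - ‖q‖ * ‖z‖ - ‖r‖ ≤ ‖p * z ^ 2 - q * z - r‖ := by
  have h₁ := norm_sub_norm_le (p * z ^ 2 - q * z) r
  have h₂ := norm_sub_norm_le (p * z ^ 2) (q * z)
  rw [norm_mul, norm_mul, norm_pow] at h₂
  linarith

theorem W_growth (k : GaussianInt) (hk : 1 < ‖(k : ℂ)‖) (W : ℕ → GaussianInt)
    (hW0 : W 0 = 1) (hW1 : W 1 = 4 * k ^ 2 - k - 2)
    (hWrec : ∀ m, W (m + 2) = 2 * (4 * k ^ 2 - 2 * k - 1) * W (m + 1) - W m) :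
    (∀ m : ℕ, 1 ≤ m →
      (8 * ‖(k : ℂ)‖ ^ 2 - 4 * ‖(k : ℂ)‖ - 3) ^ (m - 1) ≤
        ‖(W m : ℂ)‖) ∧
    StrictMono (fun m : ℕ => ‖(W m : ℂ)‖) := by
  set a := ‖(k : ℂ)‖
  set c := 8 * a ^ 2 - 4 * a - 3
  set b : ℂ := 2 * (4 * (k : ℂ) ^ 2 - 2 * k - 1)
  have hx : ∀ m, (W (m + 2) : ℂ) = b * W (m + 1) - W m := fun m => by
    simp [hWrec m, b, map_ofNat]
  have hb : c + 1 ≤ ‖b‖ := by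
    have := norm_quadratic_ge (8 : ℂ) 4 2 k
    simp only [Complex.norm_ofNat] at this
    rw [show b = 8 * (k : ℂ) ^ 2 - 4 * k - 2 by ring]
    linarith
  have hc : 1 < c := by nlinarith
  have hnorm1 : 1 < ‖(W 1 : ℂ)‖ := by
    have := norm_quadratic_ge (4 : ℂ) 1 2 k
    simp only [Complex.norm_ofNat, norm_one, one_mul] at this
    simp only [hW1, map_sub, map_mul, map_pow, map_ofNat]
    nlinarith
  have h01 : ‖(W 0 : ℂ)‖ < ‖(W 1 : ℂ)‖ := by simpa [hW0] using hnorm1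
  refine ⟨fun m hm => ?_, strictMono_norm_of_recurrence hc hb hx h01⟩
  obtain ⟨n, rfl⟩ := Nat.exists_eq_add_of_le' hm
  calc c ^ (n + 1 - 1) ≤ c ^ n * ‖(W 1 : ℂ)‖ := by
        simpa using le_mul_of_one_le_right (by positivity) hnorm1.le
    _ ≤ ‖(W (n + 1) : ℂ)‖ :=
        pow_mul_norm_le_of_recurrence (x := fun m => (W m : ℂ)) hc.le hb hx h01.le n
end

section
/- Let k be a Gaussian integer with nonzero real part and nonzero imaginary part. Then |k+1|/|k-1| is irrational. -/
/-! Since `|k + 1| |k - 1| = |k² - 1|` and `|k - 1|² = N(k - 1)` is a nonzero integer, the ratio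
`|k + 1| / |k - 1| = √N(k² - 1) / N(k - 1)` is rational exactly when `N(k² - 1)` is a perfect
square. With `n = N(k) = a² + b²` for `k = a + bi` one has
`N(k² - 1) = (n + 1)² - 4a² = (n - 1)² + 4b²`, which for `a, b ≠ 0` lies strictly between
`(n - 1)²` and `(n + 1)²`; so it could only be `n²`, forcing the odd number `2n + 1` to equal
`4a²`. -/

open GaussianInt

theorem Int.sq_eq_sq_of_sq_sub_one_lt_of_lt_sq_add_one {m t : ℤ} (hm : 0 < m)
    (hlo : (m - 1) ^ 2 < t ^ 2) (hhi : t ^ 2 < (m + 1) ^ 2) : t ^ 2 = m ^ 2 := by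
  rw [sq_lt_sq, abs_of_nonneg (by omega : 0 ≤ m - 1)] at hlo
  rw [sq_lt_sq, abs_of_pos (by omega : 0 < m + 1)] at hhi
  rw [← sq_abs t, show |t| = m by omega]

namespace GaussianInt

theorem norm_toComplex (z : GaussianInt) : ‖(z : ℂ)‖ = √(z.norm : ℝ) := by
  rw [intCast_real_norm, Complex.norm_def]

theorem norm_eq_re_sq_add_im_sq (k : GaussianInt) : k.norm = k.re ^ 2 + k.im ^ 2 := by
  rw [Zsqrtd.norm_def]; ring

theorem norm_sq_sub_one_eq_norm_add_one_sq_sub (k : GaussianInt) :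
    (k ^ 2 - 1).norm = (k.norm + 1) ^ 2 - 4 * k.re ^ 2 := by
  simp only [Zsqrtd.norm_def, sq, Zsqrtd.re_sub, Zsqrtd.im_sub, Zsqrtd.re_mul, Zsqrtd.im_mul,
    Zsqrtd.re_one, Zsqrtd.im_one]
  ring

theorem norm_sq_sub_one_eq_norm_sub_one_sq_add (k : GaussianInt) :
    (k ^ 2 - 1).norm = (k.norm - 1) ^ 2 + 4 * k.im ^ 2 := by
  rw [norm_sq_sub_one_eq_norm_add_one_sq_sub, norm_eq_re_sq_add_im_sq]; ring

theorem not_isSquare_norm_sq_sub_one {k : GaussianInt} (hre : k.re ≠ 0) (him : k.im ≠ 0) :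
    ¬IsSquare (k ^ 2 - 1).norm := by
  rintro ⟨t, ht⟩
  have hre2 : 0 < k.re ^ 2 := by positivity
  have him2 : 0 < k.im ^ 2 := by positivity
  have hn : 0 < k.norm := by rw [norm_eq_re_sq_add_im_sq]; omega
  have htn : t ^ 2 = k.norm ^ 2 := by
    refine Int.sq_eq_sq_of_sq_sub_one_lt_of_lt_sq_add_one hn ?_ ?_
    · rw [sq t, ← ht, norm_sq_sub_one_eq_norm_sub_one_sq_add]; omega
    · rw [sq t, ← ht, norm_sq_sub_one_eq_norm_add_one_sq_sub]; omega
  have hparity : 2 * k.norm + 1 = 4 * k.re ^ 2 := by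
    rw [sq t, ← ht, norm_sq_sub_one_eq_norm_add_one_sq_sub] at htn
    linear_combination htn
  omega

end GaussianInt

theorem abs_ratio_irrational (k : GaussianInt) (hre : k.re ≠ 0) (him : k.im ≠ 0) :
    Irrational (‖((k + 1 : GaussianInt) : ℂ)‖ / ‖((k - 1 : GaussianInt) : ℂ)‖) := by
  have hk : k - 1 ≠ 0 := fun h ↦ him (by simpa using congrArg Zsqrtd.im h)
  have hratio : ‖((k + 1 : GaussianInt) : ℂ)‖ / ‖((k - 1 : GaussianInt) : ℂ)‖ =
      ‖((k ^ 2 - 1 : GaussianInt) : ℂ)‖ / ‖((k - 1 : GaussianInt) : ℂ)‖ ^ 2 := by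
    rw [show k ^ 2 - 1 = (k + 1) * (k - 1) by ring, toComplex_mul, norm_mul]
    field_simp
  rw [hratio, norm_toComplex, Complex.sq_norm, ← intCast_real_norm]
  exact ((irrational_sqrt_intCast_iff_of_nonneg (norm_nonneg _)).2
    (not_isSquare_norm_sq_sub_one hre him)).div_intCast (norm_eq_zero.not.2 hk)
end

section
/- Let x, y be integers with x ≠ 0 and y ≠ 0. Then x^4 + y^4 + 1 + 2x^2y^2 - 2x^2 + 2y^2 is not a perfect square. -/
theorem not_square_norm_product (x y : ℤ) (hx : x ≠ 0) (hy : y ≠ 0) :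
    ¬ IsSquare (x ^ 4 + y ^ 4 + 1 + 2 * x ^ 2 * y ^ 2 - 2 * x ^ 2 + 2 * y ^ 2) := by
  rintro ⟨m, hm⟩
  set A : ℤ := x ^ 2 + y ^ 2 + 1 with hA
  set n : ℤ := |m| with hn
  have hn0 : 0 ≤ n := abs_nonneg m
  have hx2 : 1 ≤ x ^ 2 := by
    have h : 0 < x ^ 2 := by positivity
    linarith [Int.add_one_le_iff.mpr h]
  have hy2 : 1 ≤ y ^ 2 := by
    have h : 0 < y ^ 2 := by positivity
    linarith [Int.add_one_le_iff.mpr h]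
  have hnsq : (A - n) * (A + n) = 4 * x ^ 2 := by
    have : n * n = m * m := by rw [hn, abs_mul_abs_self]
    nlinarith [hm, this]
  -- n < A
  have hnA : n < A := by nlinarith
  -- A - n is even
  have heven : Even (A - n) := by
    rcases Int.even_or_odd (A - n) with h | h
    · exact h
    · exfalso
      have h2 : Odd (A + n) := by
        rcases h with ⟨k, hk⟩
        exact ⟨k + n, by linarith⟩
      have := h.mul h2
      rw [hnsq] at this
      rcases this with ⟨k, hk⟩
      omega
  obtain ⟨s, hs⟩ := heven
  have hs1 : 1 ≤ s := by omega
  have hsA : s ≤ A - s := by omega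
  have hkey : s * (A - s) = x ^ 2 := by nlinarith [hnsq]
  nlinarith [mul_nonneg (by linarith : (0:ℤ) ≤ s - 1) (by linarith : (0:ℤ) ≤ A - s - 1)]
end

section
/- Let k be a Gaussian integer with nonzero imaginary part. Then |16k^3 - 4k|/|k-1| is irrational. -/
/-!
Since `‖a‖ / ‖b‖ = ‖a b‖ / N(b)` and `(16k³ - 4k)(k - 1) = 4 m (m - 1)` with `m = k (2k - 1)`,
the ratio is a nonzero rational multiple of `‖m (m - 1)‖ = √N(m (m - 1))`. Now
`N(m (m - 1)) = (N m - Re m)² + (Im m)²`, and `Im m = Im k · (4 Re k - 1) ≠ 0`, while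
`(Im m)² ≤ N m - Re m` because `x ≤ x²` for integers. So `N(m (m - 1))` lies strictly between two
consecutive squares, and its square root is irrational.
-/

open GaussianInt

theorem Int.not_isSquare_of_sq_lt_of_lt_sq {m n : ℤ} (hl : m ^ 2 < n) (hr : n < (m + 1) ^ 2) :
    ¬IsSquare n := by
  rintro ⟨c, rfl⟩
  rw [← sq, sq_lt_sq] at hl hr
  cases abs_cases m <;> cases abs_cases (m + 1) <;> omega

namespace GaussianInt

theorem norm_mul_sub_one (z : GaussianInt) :
    (z * (z - 1)).norm = (z.norm - z.re) ^ 2 + z.im ^ 2 := by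
  rw [Zsqrtd.norm_mul, Zsqrtd.norm_def, Zsqrtd.norm_def]
  simp only [Zsqrtd.re_sub, Zsqrtd.im_sub, Zsqrtd.re_one, Zsqrtd.im_one]
  ring

theorem sq_im_le_norm_sub_re (z : GaussianInt) : z.im ^ 2 ≤ z.norm - z.re := by
  rw [Zsqrtd.norm_def]
  nlinarith [Int.le_self_sq z.re]

theorem not_isSquare_norm_mul_sub_one {z : GaussianInt} (hz : z.im ≠ 0) :
    ¬IsSquare (z * (z - 1)).norm := by
  have hle := sq_im_le_norm_sub_re z
  have hpos : 0 < z.im ^ 2 := by positivity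
  rw [norm_mul_sub_one]
  apply Int.not_isSquare_of_sq_lt_of_lt_sq <;> nlinarith

theorem irrational_norm_of_not_isSquare {z : GaussianInt} (h : ¬IsSquare z.norm) :
    Irrational ‖(z : ℂ)‖ := by
  rw [norm_toComplex]
  exact (irrational_sqrt_intCast_iff_of_nonneg (norm_nonneg z)).mpr h

theorem norm_div_norm_eq_norm_mul_div_norm (a b : GaussianInt) :
    ‖(a : ℂ)‖ / ‖(b : ℂ)‖ = ‖((a * b : GaussianInt) : ℂ)‖ / b.norm := by
  rw [intCast_real_norm, Complex.normSq_eq_norm_sq, toComplex_mul, norm_mul]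
  rcases eq_or_ne ‖(b : ℂ)‖ 0 with h | h
  · simp [h]
  · field_simp

end GaussianInt

theorem abs_ratio_irrational' (k : GaussianInt) (him : k.im ≠ 0) :
    Irrational (‖((16 * k ^ 3 - 4 * k : GaussianInt) : ℂ)‖ /
      ‖((k - 1 : GaussianInt) : ℂ)‖) := by
  set m : GaussianInt := k * (2 * k - 1)
  have hfactor : (16 * k ^ 3 - 4 * k) * (k - 1) = 4 * (m * (m - 1)) := by ring
  have hm : m.im ≠ 0 := by
    have him_m : m.im = k.im * (4 * k.re - 1) := by
      simp only [m, Zsqrtd.im_mul, Zsqrtd.re_mul, Zsqrtd.im_sub, Zsqrtd.re_sub, Zsqrtd.re_ofNat,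
        Zsqrtd.im_ofNat, Zsqrtd.re_one, Zsqrtd.im_one]
      ring
    rw [him_m]
    exact mul_ne_zero him (by omega)
  have hb : (k - 1).norm ≠ 0 := by
    rw [ne_eq, norm_eq_zero]
    exact fun h => him (by simpa using congrArg Zsqrtd.im h)
  have h4 : ‖((4 : GaussianInt) : ℂ)‖ = ((4 : ℕ) : ℝ) := by simp [map_ofNat]
  rw [norm_div_norm_eq_norm_mul_div_norm, hfactor, toComplex_mul, norm_mul, h4]
  exact ((irrational_norm_of_not_isSquare (not_isSquare_norm_mul_sub_one hm)).natCast_mul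
    four_ne_zero).div_intCast hb
end

section
/- Let x, y be integers with y ≠ 0. Then the integer (x^2 - 2x + 1 + y^2)(4x^2 - 4x + 1 + 4y^2)(4x^2 + 4x + 1 + 4y^2)(x^2 + y^2) is not a perfect square. -/
theorem not_square_norm_product' (x y : ℤ) (hy : y ≠ 0) :
    ¬ IsSquare ((x ^ 2 - 2 * x + 1 + y ^ 2) * (4 * x ^ 2 - 4 * x + 1 + 4 * y ^ 2) *
      (4 * x ^ 2 + 4 * x + 1 + 4 * y ^ 2) * (x ^ 2 + y ^ 2)) := by
  rintro ⟨r, hr⟩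
  set r' : ℤ := |r| with hr'def
  have hr0 : 0 ≤ r' := abs_nonneg r
  have hrr : r' * r' = (x ^ 2 - 2 * x + 1 + y ^ 2) * (4 * x ^ 2 - 4 * x + 1 + 4 * y ^ 2) *
      (4 * x ^ 2 + 4 * x + 1 + 4 * y ^ 2) * (x ^ 2 + y ^ 2) := by
    rw [hr'def, abs_mul_abs_self]; exact hr.symm
  set u : ℤ := 2 * x ^ 2 - x with hu_def
  have hu : 0 ≤ u := by
    rw [hu_def]
    rcases le_or_gt x 0 with h | h <;> nlinarith
  have hu1 : 0 ≤ u * (u - 1) := by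
    rcases hu.eq_or_lt with h | h
    · rw [← h]; ring_nf; rfl
    · exact mul_nonneg hu (by omega)
  have hy1 : 1 ≤ y ^ 2 := by
    rcases lt_or_gt_of_ne hy with h | h <;> nlinarith
  set M : ℤ := u ^ 2 - u + 4 * y ^ 2 * u + 3 * y ^ 2 + 4 * y ^ 4 with hM_def
  have hkey : r' * r' = M ^ 2 + y ^ 2 * (8 * u + 1) := by
    rw [hrr, hM_def, hu_def]; ring
  have hyu : 0 ≤ y ^ 2 * u := mul_nonneg (sq_nonneg y) hu
  have hM0 : 0 ≤ M := by rw [hM_def]; nlinarith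
  have h1 : M * M < r' * r' := by nlinarith
  have h2 : r' * r' < (M + 1) * (M + 1) := by nlinarith
  have hA : M < r' := by nlinarith
  have hB : r' < M + 1 := by nlinarith
  omega
end

section
/- Let k be a Gaussian integer with |k| > 2.5, and let V, W be sequences of Gaussian integers with V_0 = 1, V_1 = 2k-1, V_{n+2} = 2k·V_{n+1} - V_n, and W_0 = 1, W_1 = 4k^2 - k - 2, W_{m+2} = 2(4k^2-2k-1)·W_{m+1} - W_m. If V_n = ±W_m for some n, m ≥ 0, then m ≤ n ≤ 3m + 2. -/
/-!
Both sequences grow geometrically, with ratios controlled by the norms of their coefficients: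
with `r = |k|`, `(2r - 1)^n ≤ |V_n| ≤ (2r + 1)^n`, while `|W_m| ≤ (8r² + 4r + 3)^m` and
`|W_(m+1)| ≥ (4r² - r - 2)(8r² - 4r - 3)^m`. An equality `|V_n| = |W_m|`
therefore squeezes `n` between the exponents obtained by comparing these rates:
`(2r + 1)² ≤ 8r² - 4r - 3` gives `n ≥ 2m - 1`, and `8r² + 4r + 3 ≤ (2r - 1)³` gives
`n ≤ 3m`.
-/

section Recurrence

variable {R : Type*} {c : R} {u : ℕ → R}

theorem norm_le_pow_of_recurrence [SeminormedRing R] {b : ℝ}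
    (hu : ∀ p, u (p + 2) = c * u (p + 1) - u p)
    (h0 : ‖u 0‖ ≤ 1) (h1 : ‖u 1‖ ≤ b) (hb : ‖c‖ + 1 ≤ b) (p : ℕ) :
    ‖u p‖ ≤ b ^ p := by
  have hb1 : 1 ≤ b := by linarith [norm_nonneg c]
  suffices ∀ p, ‖u p‖ ≤ b ^ p ∧ ‖u (p + 1)‖ ≤ b ^ (p + 1) from (this p).1
  intro p
  induction p with
  | zero => simpa using ⟨h0, h1⟩
  | succ p ih =>
    refine ⟨ih.2, ?_⟩
    calc ‖u (p + 2)‖ ≤ ‖c‖ * ‖u (p + 1)‖ + ‖u p‖ := by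
          rw [hu]; exact (norm_sub_le _ _).trans (add_le_add_left (norm_mul_le _ _) _)
      _ ≤ ‖c‖ * b ^ (p + 1) + b ^ (p + 1) := by
          gcongr
          exacts [ih.2, ih.1.trans (pow_le_pow_right₀ hb1 p.le_succ)]
      _ = (‖c‖ + 1) * b ^ (p + 1) := by ring
      _ ≤ b * b ^ (p + 1) := by gcongr
      _ = b ^ (p + 2) := by ring

variable [NormedDivisionRing R]

theorem norm_le_norm_succ_of_recurrence (hu : ∀ p, u (p + 2) = c * u (p + 1) - u p)
    (hc : 2 ≤ ‖c‖) (h01 : ‖u 0‖ ≤ ‖u 1‖) (p : ℕ) : ‖u p‖ ≤ ‖u (p + 1)‖ := by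
  induction p with
  | zero => exact h01
  | succ p ih =>
    have h := norm_sub_norm_le (c * u (p + 1)) (u p)
    rw [norm_mul, ← hu] at h
    nlinarith [norm_nonneg (u (p + 1))]

theorem pow_mul_norm_le_norm_of_recurrence {a : ℝ}
    (hu : ∀ p, u (p + 2) = c * u (p + 1) - u p)
    (ha : 1 ≤ a) (hc : a + 1 ≤ ‖c‖) (h01 : ‖u 0‖ ≤ ‖u 1‖) (p : ℕ) :
    a ^ p * ‖u 1‖ ≤ ‖u (p + 1)‖ := by
  have hmono := norm_le_norm_succ_of_recurrence hu (by linarith) h01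
  induction p with
  | zero => simp
  | succ p ih =>
    calc a ^ (p + 1) * ‖u 1‖ = a * (a ^ p * ‖u 1‖) := by ring
      _ ≤ a * ‖u (p + 1)‖ := by gcongr
      _ ≤ ‖c‖ * ‖u (p + 1)‖ - ‖u p‖ := by nlinarith [hmono p, norm_nonneg (u (p + 1))]
      _ = ‖c * u (p + 1)‖ - ‖u p‖ := by rw [norm_mul]
      _ ≤ ‖u (p + 2)‖ := hu p ▸ norm_sub_norm_le _ _

end Recurrence

theorem norm_sub_mem_Icc {E : Type*} [SeminormedAddCommGroup E] {x y : E} {s t : ℝ}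
    (hx : ‖x‖ = s) (hy : ‖y‖ ≤ t) : ‖x - y‖ ∈ Set.Icc (s - t) (s + t) :=
  ⟨by linarith [norm_sub_norm_le x y], by linarith [norm_sub_le x y]⟩

theorem norm_V_bounds (k : ℂ) (hk : 1 ≤ ‖k‖) (V : ℕ → ℂ) (hV0 : V 0 = 1)
    (hV1 : V 1 = 2 * k - 1) (hVrec : ∀ n, V (n + 2) = 2 * k * V (n + 1) - V n) (n : ℕ) :
    (2 * ‖k‖ - 1) ^ n ≤ ‖V n‖ ∧ ‖V n‖ ≤ (2 * ‖k‖ + 1) ^ n := by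
  set r := ‖k‖
  have hc : ‖2 * k‖ = 2 * r := by simp [r]
  have h1 : ‖V 1‖ ∈ Set.Icc (2 * r - 1) (2 * r + 1) := hV1 ▸ norm_sub_mem_Icc hc norm_one.le
  refine ⟨?_, norm_le_pow_of_recurrence hVrec (by simp [hV0]) h1.2 (by rw [hc]) n⟩
  cases n with
  | zero => simp [hV0]
  | succ p =>
    calc (2 * r - 1) ^ (p + 1) = (2 * r - 1) ^ p * (2 * r - 1) := pow_succ _ _
      _ ≤ (2 * r - 1) ^ p * ‖V 1‖ :=
          mul_le_mul_of_nonneg_left h1.1 (pow_nonneg (by linarith) _)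
      _ ≤ ‖V (p + 1)‖ :=
        pow_mul_norm_le_norm_of_recurrence hVrec (by linarith) (by rw [hc]; linarith)
          (by rw [hV0, norm_one]; linarith [h1.1]) p

theorem norm_W_bounds (k : ℂ) (hk : 1 ≤ ‖k‖) (W : ℕ → ℂ) (hW0 : W 0 = 1)
    (hW1 : W 1 = 4 * k ^ 2 - k - 2)
    (hWrec : ∀ m, W (m + 2) = 2 * (4 * k ^ 2 - 2 * k - 1) * W (m + 1) - W m) (m : ℕ) :
    (8 * ‖k‖ ^ 2 - 4 * ‖k‖ - 3) ^ m * (4 * ‖k‖ ^ 2 - ‖k‖ - 2) ≤ ‖W (m + 1)‖ ∧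
      ‖W m‖ ≤ (8 * ‖k‖ ^ 2 + 4 * ‖k‖ + 3) ^ m := by
  set r := ‖k‖
  rw [show 2 * (4 * k ^ 2 - 2 * k - 1) = 8 * k ^ 2 - (4 * k + 2) by ring] at hWrec
  rw [show 4 * k ^ 2 - k - 2 = 4 * k ^ 2 - (k + 2) by ring] at hW1
  have hc :
      ‖8 * k ^ 2 - (4 * k + 2)‖ ∈ Set.Icc (8 * r ^ 2 - (4 * r + 2)) (8 * r ^ 2 + (4 * r + 2)) :=
    norm_sub_mem_Icc (by simp [r]) (norm_add_le_of_le (by simp [r]) (by simp))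
  have h1 : ‖W 1‖ ∈ Set.Icc (4 * r ^ 2 - (r + 2)) (4 * r ^ 2 + (r + 2)) :=
    hW1 ▸ norm_sub_mem_Icc (by simp [r]) (norm_add_le_of_le le_rfl (by simp))
  constructor
  · calc (8 * r ^ 2 - 4 * r - 3) ^ m * (4 * r ^ 2 - r - 2)
      _ ≤ (8 * r ^ 2 - 4 * r - 3) ^ m * ‖W 1‖ := by
          rw [← sub_sub] at h1
          exact mul_le_mul_of_nonneg_left h1.1 (pow_nonneg (by nlinarith) _)
      _ ≤ ‖W (m + 1)‖ :=
        pow_mul_norm_le_norm_of_recurrence hWrec (by nlinarith) (by linarith [hc.1])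
          (by rw [hW0, norm_one]; nlinarith [h1.1]) m
  · exact norm_le_pow_of_recurrence hWrec (by simp [hW0]) (by nlinarith [h1.2])
      (by linarith [hc.2]) m

theorem index_bounds (k : GaussianInt) (hk : (2.5 : ℝ) < ‖(k : ℂ)‖)
    (V W : ℕ → GaussianInt)
    (hV0 : V 0 = 1) (hV1 : V 1 = 2 * k - 1)
    (hVrec : ∀ n, V (n + 2) = 2 * k * V (n + 1) - V n)
    (hW0 : W 0 = 1) (hW1 : W 1 = 4 * k ^ 2 - k - 2)
    (hWrec : ∀ m, W (m + 2) = 2 * (4 * k ^ 2 - 2 * k - 1) * W (m + 1) - W m)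
    (n m : ℕ) (h : V n = W m ∨ V n = -W m) :
    m ≤ n ∧ n ≤ 3 * m + 2 := by
  set r := ‖(k : ℂ)‖
  have hV := norm_V_bounds k (by linarith) (fun p ↦ V p) (by simp [hV0])
    (by simp [hV1, map_ofNat]) (fun p ↦ by simp [hVrec, map_ofNat])
  have hW := norm_W_bounds k (by linarith) (fun p ↦ W p) (by simp [hW0])
    (by simp [hW1, map_ofNat]) (fun p ↦ by simp [hWrec, map_ofNat])
  have heq : ‖(V n : ℂ)‖ = ‖(W m : ℂ)‖ := by rcases h with h | h <;> simp [h]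
  constructor
  · rcases m with _ | m
    · exact n.zero_le
    have hpow : (2 * r + 1) ^ (2 * m + 1) ≤ (2 * r + 1) ^ n :=
      calc (2 * r + 1) ^ (2 * m + 1)
        _ = ((2 * r + 1) ^ 2) ^ m * (2 * r + 1) := by rw [pow_succ, pow_mul]
        _ ≤ (8 * r ^ 2 - 4 * r - 3) ^ m * (4 * r ^ 2 - r - 2) :=
          mul_le_mul (pow_le_pow_left₀ (by positivity) (by nlinarith) m) (by nlinarith)
            (by positivity) (pow_nonneg (by nlinarith) m)
        _ ≤ ‖(W (m + 1) : ℂ)‖ := (hW m).1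
        _ = ‖(V n : ℂ)‖ := heq.symm
        _ ≤ (2 * r + 1) ^ n := (hV n).2
    have := (pow_le_pow_iff_right₀ (by linarith)).mp hpow
    omega
  · have hpow : (2 * r - 1) ^ n ≤ (2 * r - 1) ^ (3 * m) :=
      calc (2 * r - 1) ^ n ≤ ‖(V n : ℂ)‖ := (hV n).1
        _ = ‖(W m : ℂ)‖ := heq
        _ ≤ (8 * r ^ 2 + 4 * r + 3) ^ m := (hW m).2
        -- `(2r - 1)³ - (8r² + 4r + 3) = 8r³ - 20r² + 2r - 4` is positive for `r ≥ 5/2`: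
        -- this is where the hypothesis `|k| > 2.5` enters.
        _ ≤ ((2 * r - 1) ^ 3) ^ m := by
          gcongr
          nlinarith [mul_pos (by linarith : 0 < r) (by linarith : 0 < r)]
        _ = (2 * r - 1) ^ (3 * m) := by rw [pow_mul]
    have := (pow_le_pow_iff_right₀ (by linarith)).mp hpow
    omega
end
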